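/- arXiv:2310.02360 — 5 statements merged into one kernel-verified Lean document; each statement's English description precedes it below -/
import Mathlib

section
/- Let (S, A, 𝒜, p, r, γ) be a finite soft MDP. The soft Bellman optimality operator T is a γ-contraction in the sup norm: for all Q₁, Q₂ : S × A → ℝ, ‖T Q₁ − T Q₂‖ ≤ γ · ‖Q₁ − Q₂‖. -/
lemma lse_le {A : Type} (t : Finset A) (ht : t.Nonempty) (f g : A → ℝ) (c : ℝ)
    (h : ∀ a ∈ t, f a - g a ≤ c) :
    Real.log (∑ a ∈ t, Real.exp (f a)) - Real.log (∑ a ∈ t, Real.exp (g a)) ≤ c := by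
  have hg : 0 < ∑ a ∈ t, Real.exp (g a) :=
    Finset.sum_pos (fun a _ => Real.exp_pos _) ht
  have hf : ∑ a ∈ t, Real.exp (f a) ≤ Real.exp c * ∑ a ∈ t, Real.exp (g a) := by
    rw [Finset.mul_sum]
    refine Finset.sum_le_sum fun a ha => ?_
    rw [← Real.exp_add]
    exact Real.exp_le_exp.2 (by linarith [h a ha])
  calc Real.log (∑ a ∈ t, Real.exp (f a)) - Real.log (∑ a ∈ t, Real.exp (g a))
      ≤ Real.log (Real.exp c * ∑ a ∈ t, Real.exp (g a)) - Real.log (∑ a ∈ t, Real.exp (g a)) := by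
        gcongr

    _ = c := by rw [Real.log_mul (Real.exp_ne_zero c) (ne_of_gt hg), Real.log_exp]; ring

lemma lse_abs {A : Type} (t : Finset A) (ht : t.Nonempty) (f g : A → ℝ) (c : ℝ)
    (h : ∀ a ∈ t, |f a - g a| ≤ c) :
    |Real.log (∑ a ∈ t, Real.exp (f a)) - Real.log (∑ a ∈ t, Real.exp (g a))| ≤ c := by
  rw [abs_sub_le_iff]
  constructor
  · exact lse_le t ht f g c fun a ha => (abs_le.1 (h a ha)).2
  · exact lse_le t ht g f c fun a ha => by
      have := (abs_le.1 (h a ha)).1; linarith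


/-- A finite soft MDP: finite nonempty state space `S`, finite action space `A`,
nonempty allowed-action sets, a transition kernel, a reward, and a discount `0 ≤ γ < 1`. -/
structure SoftMDP (S A : Type) [Fintype S] [Fintype A] where
  act : S → Finset A
  act_nonempty : ∀ s, (act s).Nonempty
  p : S → A → S → ℝ
  p_nonneg : ∀ s a s', 0 ≤ p s a s'
  p_sum_one : ∀ s a, ∑ s', p s a s' = 1
  r : S → A → ℝ
  γ : ℝ
  γ_nonneg : 0 ≤ γ
  γ_lt_one : γ < 1

/-- The soft Bellman optimality operator:
`(T Q)(s,a) = r(s,a) + γ ∑_{s'} p(s,a,s') log ∑_{a' ∈ 𝒜(s')} exp Q(s',a')`. -/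
noncomputable def softBellman {S A : Type} [Fintype S] [Fintype A]
    (M : SoftMDP S A) (Q : S → A → ℝ) : S → A → ℝ :=
  fun s a => M.r s a + M.γ * ∑ s', M.p s a s' *
    Real.log (∑ a' ∈ M.act s', Real.exp (Q s' a'))

/-- The sup norm `‖Q‖ = max_{s,a} |Q(s,a)|`. -/
noncomputable def supNorm {S A : Type} [Fintype S] [Fintype A] [Nonempty S] [Nonempty A]
    (Q : S → A → ℝ) : ℝ :=
  Finset.univ.sup' Finset.univ_nonempty (fun sa : S × A => |Q sa.1 sa.2|)

/-- The soft Bellman optimality operator is a `γ`-contraction in the sup norm. -/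
theorem softBellman_contraction {S A : Type} [Fintype S] [Fintype A] [Nonempty S] [Nonempty A]
    (M : SoftMDP S A) (Q₁ Q₂ : S → A → ℝ) :
    supNorm (fun s a => softBellman M Q₁ s a - softBellman M Q₂ s a) ≤
      M.γ * supNorm (fun s a => Q₁ s a - Q₂ s a) := by
  set N := supNorm (fun s a => Q₁ s a - Q₂ s a) with hN
  apply Finset.sup'_le
  intro sa _
  have key : ∀ s', |Real.log (∑ a' ∈ M.act s', Real.exp (Q₁ s' a')) -
      Real.log (∑ a' ∈ M.act s', Real.exp (Q₂ s' a'))| ≤ N := by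
    intro s'
    refine lse_abs _ (M.act_nonempty s') _ _ N fun a' _ => ?_
    exact Finset.le_sup' (f := fun sa : S × A => |Q₁ sa.1 sa.2 - Q₂ sa.1 sa.2|)
      (Finset.mem_univ (s', a'))
  simp only [softBellman]
  have : M.r sa.1 sa.2 + M.γ * ∑ s', M.p sa.1 sa.2 s' *
        Real.log (∑ a' ∈ M.act s', Real.exp (Q₁ s' a')) -
      (M.r sa.1 sa.2 + M.γ * ∑ s', M.p sa.1 sa.2 s' *
        Real.log (∑ a' ∈ M.act s', Real.exp (Q₂ s' a'))) =
      M.γ * ∑ s', M.p sa.1 sa.2 s' *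
        (Real.log (∑ a' ∈ M.act s', Real.exp (Q₁ s' a')) -
         Real.log (∑ a' ∈ M.act s', Real.exp (Q₂ s' a'))) := by
    simp only [Finset.mul_sum]
    rw [add_sub_add_left_eq_sub, ← Finset.sum_sub_distrib]
    exact Finset.sum_congr rfl fun s' _ => by ring
  rw [this, abs_mul, abs_of_nonneg M.γ_nonneg]
  refine mul_le_mul_of_nonneg_left ?_ M.γ_nonneg
  calc |∑ s', M.p sa.1 sa.2 s' * (Real.log (∑ a' ∈ M.act s', Real.exp (Q₁ s' a')) -
         Real.log (∑ a' ∈ M.act s', Real.exp (Q₂ s' a')))|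
      ≤ ∑ s', |M.p sa.1 sa.2 s' * (Real.log (∑ a' ∈ M.act s', Real.exp (Q₁ s' a')) -
         Real.log (∑ a' ∈ M.act s', Real.exp (Q₂ s' a')))| := Finset.abs_sum_le_sum_abs _ _
    _ ≤ ∑ s', M.p sa.1 sa.2 s' * N := by
        refine Finset.sum_le_sum fun s' _ => ?_
        rw [abs_mul, abs_of_nonneg (M.p_nonneg _ _ _)]
        exact mul_le_mul_of_nonneg_left (key s') (M.p_nonneg _ _ _)
    _ = N := by rw [← Finset.sum_mul, M.p_sum_one, one_mul]
end

section
/- (Arbiter/soft policy improvement.) Let (S, A, 𝒜, p, r, γ) be a finite soft MDP, let π be a policy, and let Q^π be the unique fixed point of T^π. Define the improved policy π' by π'(a|s) = exp Q^π(s,a) / Σ_{a' ∈ 𝒜(s)} exp Q^π(s,a') for a ∈ 𝒜(s), and π'(a|s) = 0 for a ∉ 𝒜(s), and let Q^{π'} be the unique fixed point of T^{π'}. Then Q^{π'}(s,a) ≥ Q^π(s,a) for all s ∈ S and a ∈ A. -/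
/-- A policy: a probability mass function `π(·|s)` on `A` for each state `s`,
supported on the allowed actions `𝒜(s)`. -/
structure Policy {S A : Type} [Fintype S] [Fintype A] (M : SoftMDP S A) where
  pi : S → A → ℝ
  pi_nonneg : ∀ s a, 0 ≤ pi s a
  pi_sum_one : ∀ s, ∑ a, pi s a = 1
  pi_support : ∀ s a, a ∉ M.act s → pi s a = 0

/-- The on-policy soft Bellman backup operator:
`(T^π Q)(s,a) = r(s,a) + γ ∑_{s'} p(s,a,s') ∑_{a'} π(a'|s') (Q(s',a') − log π(a'|s'))`,
where terms with `π(a'|s') = 0` contribute `0` (as the product vanishes). -/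
noncomputable def softBellmanPi {S A : Type} [Fintype S] [Fintype A]
    (M : SoftMDP S A) (π : Policy M) (Q : S → A → ℝ) : S → A → ℝ :=
  fun s a => M.r s a + M.γ * ∑ s', M.p s a s' *
    ∑ a', π.pi s' a' * (Q s' a' - Real.log (π.pi s' a'))



open Finset in
/-- Gibbs' inequality: the entropy-regularized value of any pmf `w` supported on `act`
is at most `log ∑_{a ∈ act} exp (Q a)`. -/
lemma gibbs_aux {A : Type} [Fintype A] (act : Finset A)
    (w : A → ℝ) (hw0 : ∀ a, 0 ≤ w a) (hw1 : ∑ a, w a = 1)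
    (hws : ∀ a, a ∉ act → w a = 0) (Q : A → ℝ) :
    ∑ a, w a * (Q a - Real.log (w a)) ≤ Real.log (∑ a ∈ act, Real.exp (Q a)) := by
  classical
  set t := Finset.univ.filter (fun a => 0 < w a) with ht
  have hmem : ∀ a, a ∉ t → w a = 0 := by
    intro a ha
    by_contra h
    exact ha (Finset.mem_filter.mpr ⟨Finset.mem_univ a,
      lt_of_le_of_ne (hw0 a) (Ne.symm h)⟩)
  have hpos : ∀ a ∈ t, 0 < w a := fun a ha => (Finset.mem_filter.mp ha).2
  have hsub : t ⊆ act := by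
    intro a ha
    by_contra h
    exact absurd (hws a h) (ne_of_gt (hpos a ha))
  have hsum_t : ∑ a ∈ t, w a = 1 := by
    rw [← hw1]
    exact Finset.sum_subset (Finset.subset_univ t) (fun a _ ha => hmem a ha)
  have hmain : ∑ a, w a * (Q a - Real.log (w a))
      = ∑ a ∈ t, w a * (Q a - Real.log (w a)) := by
    symm
    apply Finset.sum_subset (Finset.subset_univ t)
    intro a _ ha
    rw [hmem a ha]; ring
  rw [hmain]
  have hjen : ∑ a ∈ t, w a • Real.log (Real.exp (Q a) / w a)
      ≤ Real.log (∑ a ∈ t, w a • (Real.exp (Q a) / w a)) := by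
    apply (strictConcaveOn_log_Ioi.concaveOn).le_map_sum
      (fun a ha => hw0 a) hsum_t
    intro a ha
    exact Set.mem_Ioi.mpr (div_pos (Real.exp_pos _) (hpos a ha))
  have h1 : ∑ a ∈ t, w a * (Q a - Real.log (w a))
      = ∑ a ∈ t, w a • Real.log (Real.exp (Q a) / w a) := by
    apply Finset.sum_congr rfl
    intro a ha
    rw [smul_eq_mul, Real.log_div (Real.exp_ne_zero _) (ne_of_gt (hpos a ha)),
      Real.log_exp]
  have h2 : ∑ a ∈ t, w a • (Real.exp (Q a) / w a) = ∑ a ∈ t, Real.exp (Q a) := by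
    apply Finset.sum_congr rfl
    intro a ha
    rw [smul_eq_mul, mul_div_cancel₀ _ (ne_of_gt (hpos a ha))]
  rw [h1]
  refine le_trans hjen ?_
  rw [h2]
  apply Real.log_le_log
  · apply Finset.sum_pos (fun a _ => Real.exp_pos _)
    exact Finset.nonempty_of_sum_ne_zero (f := w) (by rw [hsum_t]; exact one_ne_zero)
  · exact Finset.sum_le_sum_of_subset_of_nonneg hsub
      (fun a _ _ => le_of_lt (Real.exp_pos _))


/-- Arbiter/soft policy improvement: if `Q^π` is the fixed point of `T^π`
and `π'` is the Boltzmann policy of `Q^π` restricted to the allowed actions, i.e.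
`π'(a|s) = exp Q^π(s,a) / ∑_{a' ∈ 𝒜(s)} exp Q^π(s,a')` for `a ∈ 𝒜(s)` and `0` otherwise,
then the fixed point `Q^{π'}` of `T^{π'}` satisfies `Q^{π'} ≥ Q^π` everywhere. -/
theorem soft_policy_improvement {S A : Type} [Fintype S] [Fintype A] [DecidableEq A]
    (M : SoftMDP S A) (π π' : Policy M) (Qpi Qpi' : S → A → ℝ)
    (hfix : softBellmanPi M π Qpi = Qpi)
    (hfix' : softBellmanPi M π' Qpi' = Qpi')
    (hπ' : ∀ s a, π'.pi s a =
      if a ∈ M.act s then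
        Real.exp (Qpi s a) / ∑ a' ∈ M.act s, Real.exp (Qpi s a')
      else 0) :
    ∀ s a, Qpi s a ≤ Qpi' s a := by
  classical
  set Z : S → ℝ := fun s => ∑ a ∈ M.act s, Real.exp (Qpi s a) with hZ
  have hZpos : ∀ s, 0 < Z s := fun s =>
    Finset.sum_pos (fun a _ => Real.exp_pos _) (M.act_nonempty s)
  -- The Boltzmann policy attains the soft value `log Z s`.
  have hB : ∀ s, ∑ a, π'.pi s a * (Qpi s a - Real.log (π'.pi s a)) = Real.log (Z s) := by
    intro s
    have h1 : ∀ a, π'.pi s a * (Qpi s a - Real.log (π'.pi s a))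
        = π'.pi s a * Real.log (Z s) := by
      intro a
      by_cases h : a ∈ M.act s
      · rw [hπ' s a, if_pos h,
          Real.log_div (Real.exp_ne_zero _) (ne_of_gt (hZpos s)), Real.log_exp]
        ring
      · rw [hπ' s a, if_neg h]; ring
    simp_rw [h1]
    rw [← Finset.sum_mul, π'.pi_sum_one s, one_mul]
  -- Step 1: `Qpi ≤ T^{π'} Qpi`.
  have hstep : ∀ s a, Qpi s a ≤ softBellmanPi M π' Qpi s a := by
    intro s a
    conv_lhs => rw [← hfix]
    show M.r s a + _ ≤ M.r s a + _
    apply add_le_add (le_refl _)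
    apply mul_le_mul_of_nonneg_left _ M.γ_nonneg
    apply Finset.sum_le_sum
    intro s' _
    apply mul_le_mul_of_nonneg_left _ (M.p_nonneg s a s')
    rw [hB s']
    exact gibbs_aux (M.act s') (π.pi s') (π.pi_nonneg s') (π.pi_sum_one s')
      (π.pi_support s') (Qpi s')
  -- Step 2: contraction argument on the maximal gap.
  intro s a
  have hne : (Finset.univ : Finset (S × A)).Nonempty := ⟨(s, a), Finset.mem_univ _⟩
  obtain ⟨⟨s0, a0⟩, -, hmax⟩ :=
    Finset.exists_max_image Finset.univ (fun q => Qpi q.1 q.2 - Qpi' q.1 q.2) hne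
  set d := Qpi s0 a0 - Qpi' s0 a0 with hd
  have hmax' : ∀ s' a', Qpi s' a' - Qpi' s' a' ≤ d :=
    fun s' a' => hmax (s', a') (Finset.mem_univ _)
  have hdiff : softBellmanPi M π' Qpi s0 a0 - softBellmanPi M π' Qpi' s0 a0
      = M.γ * ∑ s', M.p s0 a0 s' * ∑ a', π'.pi s' a' * (Qpi s' a' - Qpi' s' a') := by
    show M.r s0 a0 + M.γ * _ - (M.r s0 a0 + M.γ * _) = _
    rw [add_sub_add_left_eq_sub, ← mul_sub, ← Finset.sum_sub_distrib]
    congr 1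
    apply Finset.sum_congr rfl
    intro s' _
    rw [← mul_sub, ← Finset.sum_sub_distrib]
    congr 1
    apply Finset.sum_congr rfl
    intro a' _
    ring
  have hbound : ∑ s', M.p s0 a0 s' * ∑ a', π'.pi s' a' * (Qpi s' a' - Qpi' s' a')
      ≤ d := by
    have hinner : ∀ s', ∑ a', π'.pi s' a' * (Qpi s' a' - Qpi' s' a') ≤ d := by
      intro s'
      calc ∑ a', π'.pi s' a' * (Qpi s' a' - Qpi' s' a')
          ≤ ∑ a', π'.pi s' a' * d := by
            apply Finset.sum_le_sum
            intro a' _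
            exact mul_le_mul_of_nonneg_left (hmax' s' a') (π'.pi_nonneg s' a')
        _ = d := by rw [← Finset.sum_mul, π'.pi_sum_one s', one_mul]
    calc ∑ s', M.p s0 a0 s' * ∑ a', π'.pi s' a' * (Qpi s' a' - Qpi' s' a')
        ≤ ∑ s', M.p s0 a0 s' * d := by
          apply Finset.sum_le_sum
          intro s' _
          exact mul_le_mul_of_nonneg_left (hinner s') (M.p_nonneg s0 a0 s')
      _ = d := by rw [← Finset.sum_mul, M.p_sum_one s0 a0, one_mul]
  have hkey : d ≤ M.γ * d := by
    have h1 : Qpi s0 a0 ≤ softBellmanPi M π' Qpi s0 a0 := hstep s0 a0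
    have h2 : softBellmanPi M π' Qpi' s0 a0 = Qpi' s0 a0 :=
      congrFun (congrFun hfix' s0) a0
    calc d = Qpi s0 a0 - Qpi' s0 a0 := hd
      _ ≤ softBellmanPi M π' Qpi s0 a0 - softBellmanPi M π' Qpi' s0 a0 := by
          rw [h2]; linarith
      _ = M.γ * ∑ s', M.p s0 a0 s' * ∑ a', π'.pi s' a' * (Qpi s' a' - Qpi' s' a') :=
          hdiff
      _ ≤ M.γ * d := mul_le_mul_of_nonneg_left hbound M.γ_nonneg
  have hd0 : d ≤ 0 := by nlinarith [M.γ_lt_one]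
  have := hmax' s a
  linarith
end

section
/- (Arbiter policy iteration, convergence to the optimal soft Q-function.) Let (S, A, 𝒜, p, r, γ) be a finite soft MDP, and let Q* be the unique fixed point of the soft Bellman optimality operator T. Given an initial policy π⁰, define inductively: Q^l is the unique fixed point of T^{π^l}, and π^{l+1}(a|s) = exp Q^l(s,a) / Σ_{a' ∈ 𝒜(s)} exp Q^l(s,a') for a ∈ 𝒜(s), with π^{l+1}(a|s) = 0 for a ∉ 𝒜(s). Then Q^l(s,a) converges to Q*(s,a) as l → ∞, for every s ∈ S and a ∈ A. -/
open Filter Topology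

section Aux
variable {S A : Type} [Fintype S] [Fintype A]

/-- Gibbs inequality: the entropy-regularized value of any policy is at most the log-sum-exp. -/
lemma entropy_le (M : SoftMDP S A) (π : Policy M) (Q : S → A → ℝ) (s : S) :
    ∑ a, π.pi s a * (Q s a - Real.log (π.pi s a)) ≤
      Real.log (∑ a ∈ M.act s, Real.exp (Q s a)) := by
  classical
  set T : Finset A := Finset.univ.filter (fun a => π.pi s a ≠ 0) with hT
  have hTsub : T ⊆ M.act s := by
    intro a ha
    by_contra h
    exact (Finset.mem_filter.mp ha).2 (π.pi_support s a h)
  have hfpos : ∀ a ∈ T, 0 < π.pi s a := fun a ha =>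
    (π.pi_nonneg s a).lt_of_ne (Ne.symm (Finset.mem_filter.mp ha).2)
  have hsum1 : ∑ a ∈ T, π.pi s a = 1 := by
    rw [hT, Finset.sum_filter_ne_zero, π.pi_sum_one s]
  have hrestrict : ∑ a, π.pi s a * (Q s a - Real.log (π.pi s a)) =
      ∑ a ∈ T, π.pi s a * (Q s a - Real.log (π.pi s a)) := by
    symm
    apply Finset.sum_filter_of_ne
    intro a _ h hpi
    exact h (by rw [hpi, zero_mul])
  rw [hrestrict]
  have hjensen := strictConcaveOn_log_Ioi.concaveOn.le_map_sum
    (t := T) (w := fun a => π.pi s a) (p := fun a => Real.exp (Q s a) / π.pi s a)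
    (fun a ha => (hfpos a ha).le) hsum1
    (fun a ha => Set.mem_Ioi.mpr (div_pos (Real.exp_pos _) (hfpos a ha)))
  simp only [smul_eq_mul] at hjensen
  have heq : ∀ a ∈ T, π.pi s a * Real.log (Real.exp (Q s a) / π.pi s a) =
      π.pi s a * (Q s a - Real.log (π.pi s a)) := by
    intro a ha
    rw [Real.log_div (Real.exp_ne_zero _) (hfpos a ha).ne', Real.log_exp]
  rw [Finset.sum_congr rfl heq] at hjensen
  refine hjensen.trans ?_
  have hptsum : ∀ a ∈ T, π.pi s a * (Real.exp (Q s a) / π.pi s a) = Real.exp (Q s a) := by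
    intro a ha; rw [mul_comm, div_mul_cancel₀ _ (hfpos a ha).ne']
  rw [Finset.sum_congr rfl hptsum]
  have hTne : T.Nonempty := by
    by_contra h
    rw [Finset.not_nonempty_iff_eq_empty] at h
    rw [h, Finset.sum_empty] at hsum1
    norm_num at hsum1
  apply Real.log_le_log
  · exact Finset.sum_pos (fun a _ => Real.exp_pos _) hTne
  · exact Finset.sum_le_sum_of_subset_of_nonneg hTsub
      (fun a _ _ => (Real.exp_pos _).le)

/-- `T^π Q ≤ T Q` pointwise. -/
lemma softBellmanPi_le_softBellman (M : SoftMDP S A) (π : Policy M) (Q : S → A → ℝ)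
    (s : S) (a : A) : softBellmanPi M π Q s a ≤ softBellman M Q s a := by
  unfold softBellmanPi softBellman
  exact add_le_add_right (mul_le_mul_of_nonneg_left
    (Finset.sum_le_sum fun s' _ => mul_le_mul_of_nonneg_left
      (entropy_le M π Q s') (M.p_nonneg s a s')) M.γ_nonneg) _

/-- Monotonicity of `T^π`. -/
lemma softBellmanPi_mono (M : SoftMDP S A) (π : Policy M) {Q Q' : S → A → ℝ}
    (h : ∀ s a, Q s a ≤ Q' s a) (s : S) (a : A) :
    softBellmanPi M π Q s a ≤ softBellmanPi M π Q' s a := by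
  unfold softBellmanPi
  refine add_le_add_right (mul_le_mul_of_nonneg_left
    (Finset.sum_le_sum fun s' _ => mul_le_mul_of_nonneg_left
      (Finset.sum_le_sum fun a' _ => mul_le_mul_of_nonneg_left
        (by have := h s' a'; linarith) (π.pi_nonneg s' a'))
      (M.p_nonneg s a s')) M.γ_nonneg) _

/-- Monotonicity of `T`. -/
lemma softBellman_mono (M : SoftMDP S A) {Q Q' : S → A → ℝ}
    (h : ∀ s a, Q s a ≤ Q' s a) (s : S) (a : A) :
    softBellman M Q s a ≤ softBellman M Q' s a := by
  unfold softBellman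
  refine add_le_add_right (mul_le_mul_of_nonneg_left
    (Finset.sum_le_sum fun s' _ => mul_le_mul_of_nonneg_left
      (Real.log_le_log (Finset.sum_pos (fun a' _ => Real.exp_pos _) (M.act_nonempty _))
        (Finset.sum_le_sum fun a' _ => Real.exp_le_exp.mpr (h s' a')))
      (M.p_nonneg s a s')) M.γ_nonneg) _

/-- Translation property of `T^π`. -/
lemma softBellmanPi_shift (M : SoftMDP S A) (π : Policy M) (Q : S → A → ℝ) (c : ℝ)
    (s : S) (a : A) :
    softBellmanPi M π (fun s a => Q s a + c) s a = softBellmanPi M π Q s a + M.γ * c := by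
  unfold softBellmanPi
  have hinner : ∀ s' : S, ∑ a', π.pi s' a' * (Q s' a' + c - Real.log (π.pi s' a'))
      = (∑ a', π.pi s' a' * (Q s' a' - Real.log (π.pi s' a'))) + c := by
    intro s'
    have : ∀ a', π.pi s' a' * (Q s' a' + c - Real.log (π.pi s' a'))
        = π.pi s' a' * (Q s' a' - Real.log (π.pi s' a')) + π.pi s' a' * c := by
      intro a'; ring
    rw [Finset.sum_congr rfl (fun a' _ => this a'), Finset.sum_add_distrib,
      ← Finset.sum_mul, π.pi_sum_one s', one_mul]
  simp only [hinner, mul_add]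
  rw [Finset.sum_add_distrib, ← Finset.sum_mul, M.p_sum_one s a]
  ring

/-- Translation property of `T`. -/
lemma softBellman_shift (M : SoftMDP S A) (Q : S → A → ℝ) (c : ℝ) (s : S) (a : A) :
    softBellman M (fun s a => Q s a + c) s a = softBellman M Q s a + M.γ * c := by
  unfold softBellman
  have hinner : ∀ s' : S, Real.log (∑ a' ∈ M.act s', Real.exp (Q s' a' + c))
      = Real.log (∑ a' ∈ M.act s', Real.exp (Q s' a')) + c := by
    intro s'
    have : ∀ a' ∈ M.act s', Real.exp (Q s' a' + c) = Real.exp (Q s' a') * Real.exp c :=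
      fun a' _ => Real.exp_add _ _
    rw [Finset.sum_congr rfl this, ← Finset.sum_mul,
      Real.log_mul (Finset.sum_pos (fun a' _ => Real.exp_pos _) (M.act_nonempty _)).ne'
        (Real.exp_ne_zero _), Real.log_exp]
  simp only [hinner, mul_add]
  rw [Finset.sum_add_distrib, ← Finset.sum_mul, M.p_sum_one s a]
  ring

/-- Value of the Boltzmann policy equals the log-sum-exp: `T^{π'} Q = T Q` where `π'` is
the Boltzmann policy of `Q`. -/
lemma boltzmann_value [DecidableEq A] (M : SoftMDP S A) (π' : Policy M) (Q0 : S → A → ℝ)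
    (h : ∀ s a, π'.pi s a = if a ∈ M.act s then
      Real.exp (Q0 s a) / ∑ a' ∈ M.act s, Real.exp (Q0 s a') else 0) :
    ∀ s a, softBellmanPi M π' Q0 s a = softBellman M Q0 s a := by
  have key : ∀ s', ∑ a', π'.pi s' a' * (Q0 s' a' - Real.log (π'.pi s' a')) =
      Real.log (∑ a' ∈ M.act s', Real.exp (Q0 s' a')) := by
    intro s'
    have hZpos : 0 < ∑ a' ∈ M.act s', Real.exp (Q0 s' a') :=
      Finset.sum_pos (fun _ _ => Real.exp_pos _) (M.act_nonempty s')
    have hsub : ∑ a' ∈ M.act s', π'.pi s' a' * (Q0 s' a' - Real.log (π'.pi s' a')) =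
        ∑ a', π'.pi s' a' * (Q0 s' a' - Real.log (π'.pi s' a')) := by
      apply Finset.sum_subset (Finset.subset_univ _)
      intro x _ hx
      rw [π'.pi_support s' x hx, zero_mul]
    rw [← hsub]
    have hterm : ∀ a' ∈ M.act s', π'.pi s' a' * (Q0 s' a' - Real.log (π'.pi s' a')) =
        Real.exp (Q0 s' a') / (∑ a'' ∈ M.act s', Real.exp (Q0 s' a'')) *
          Real.log (∑ a'' ∈ M.act s', Real.exp (Q0 s' a'')) := by
      intro a' ha'
      rw [h s' a', if_pos ha', Real.log_div (Real.exp_ne_zero _) hZpos.ne', Real.log_exp]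
      ring
    rw [Finset.sum_congr rfl hterm, ← Finset.sum_mul, ← Finset.sum_div,
      div_self hZpos.ne', one_mul]
  intro s a
  unfold softBellmanPi softBellman
  simp only [key]

/-- Comparison: a subsolution is below any fixed point of a monotone `γ`-shift operator. -/
lemma sub_le_fixed [Nonempty S] [Nonempty A]
    (γ : ℝ) (hγ0 : 0 ≤ γ) (hγ1 : γ < 1)
    (F : (S → A → ℝ) → (S → A → ℝ))
    (hmono : ∀ Q Q' : S → A → ℝ, (∀ s a, Q s a ≤ Q' s a) → ∀ s a, F Q s a ≤ F Q' s a)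
    (hshift : ∀ (Q : S → A → ℝ) (c : ℝ) (s : S) (a : A),
      F (fun s a => Q s a + c) s a = F Q s a + γ * c)
    (X Q : S → A → ℝ) (hX : ∀ s a, X s a ≤ F X s a) (hQ : ∀ s a, F Q s a = Q s a) :
    ∀ s a, X s a ≤ Q s a := by
  classical
  set c : ℝ := Finset.univ.sup' Finset.univ_nonempty
    (fun p : S × A => X p.1 p.2 - Q p.1 p.2) with hc
  set c' : ℝ := max c 0 with hc'
  have hle : ∀ s a, X s a ≤ Q s a + c' := by
    intro s a
    have h1 := Finset.le_sup' (f := fun p : S × A => X p.1 p.2 - Q p.1 p.2)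
      (Finset.mem_univ (s, a))
    have h2 : c ≤ c' := le_max_left _ _
    simp only at h1
    linarith
  have hstep : ∀ s a, X s a - Q s a ≤ γ * c' := by
    intro s a
    have h1 := hX s a
    have h2 := hmono X (fun s a => Q s a + c') hle s a
    rw [hshift Q c' s a, hQ s a] at h2
    linarith
  have hcle : c ≤ γ * c' := Finset.sup'_le _ _ (fun p _ => hstep p.1 p.2)
  have hc0 : c ≤ 0 := by
    by_contra hcon
    push_neg at hcon
    have hcc : c' = c := max_eq_left hcon.le
    rw [hcc] at hcle
    nlinarith
  intro s a
  have h1 := Finset.le_sup' (f := fun p : S × A => X p.1 p.2 - Q p.1 p.2)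
    (Finset.mem_univ (s, a))
  simp only at h1
  linarith

/-- Comparison: a fixed point is below any supersolution of a monotone `γ`-shift operator. -/
lemma fixed_le_super [Nonempty S] [Nonempty A]
    (γ : ℝ) (hγ0 : 0 ≤ γ) (hγ1 : γ < 1)
    (F : (S → A → ℝ) → (S → A → ℝ))
    (hmono : ∀ Q Q' : S → A → ℝ, (∀ s a, Q s a ≤ Q' s a) → ∀ s a, F Q s a ≤ F Q' s a)
    (hshift : ∀ (Q : S → A → ℝ) (c : ℝ) (s : S) (a : A),
      F (fun s a => Q s a + c) s a = F Q s a + γ * c)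
    (Q Y : S → A → ℝ) (hQ : ∀ s a, F Q s a = Q s a) (hY : ∀ s a, F Y s a ≤ Y s a) :
    ∀ s a, Q s a ≤ Y s a := by
  classical
  set c : ℝ := Finset.univ.sup' Finset.univ_nonempty
    (fun p : S × A => Q p.1 p.2 - Y p.1 p.2) with hc
  set c' : ℝ := max c 0 with hc'
  have hle : ∀ s a, Q s a ≤ Y s a + c' := by
    intro s a
    have h1 := Finset.le_sup' (f := fun p : S × A => Q p.1 p.2 - Y p.1 p.2)
      (Finset.mem_univ (s, a))
    have h2 : c ≤ c' := le_max_left _ _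
    simp only at h1
    linarith
  have hstep : ∀ s a, Q s a - Y s a ≤ γ * c' := by
    intro s a
    have h2 := hmono Q (fun s a => Y s a + c') hle s a
    rw [hshift Y c' s a, hQ s a] at h2
    have h3 := hY s a
    linarith
  have hcle : c ≤ γ * c' := Finset.sup'_le _ _ (fun p _ => hstep p.1 p.2)
  have hc0 : c ≤ 0 := by
    by_contra hcon
    push_neg at hcon
    have hcc : c' = c := max_eq_left hcon.le
    rw [hcc] at hcle
    nlinarith
  intro s a
  have h1 := Finset.le_sup' (f := fun p : S × A => Q p.1 p.2 - Y p.1 p.2)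
    (Finset.mem_univ (s, a))
  simp only at h1
  linarith

end Aux

/-- Arbiter policy iteration, convergence: let `Q*` be the unique fixed
point of the soft Bellman optimality operator `T`. Given an initial policy `π⁰`, let
`Q^l` be the fixed point of `T^{π^l}` and let `π^{l+1}` be the Boltzmann policy of `Q^l`
restricted to the allowed actions. Then `Q^l(s,a) → Q*(s,a)` as `l → ∞`, for all `s, a`. -/
theorem soft_policy_iteration_converges {S A : Type} [Fintype S] [Fintype A] [DecidableEq A]
    (M : SoftMDP S A) (Qstar : S → A → ℝ)
    (hstar : softBellman M Qstar = Qstar)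
    (hstar_unique : ∀ Q : S → A → ℝ, softBellman M Q = Q → Q = Qstar)
    (πseq : ℕ → Policy M) (Qseq : ℕ → S → A → ℝ)
    (hfix : ∀ l, softBellmanPi M (πseq l) (Qseq l) = Qseq l)
    (himp : ∀ l s a, (πseq (l + 1)).pi s a =
      if a ∈ M.act s then
        Real.exp (Qseq l s a) / ∑ a' ∈ M.act s, Real.exp (Qseq l s a')
      else 0) :
    ∀ s a, Tendsto (fun l => Qseq l s a) atTop (𝓝 (Qstar s a)) := by
  intro s a
  haveI : Nonempty S := ⟨s⟩
  haveI : Nonempty A := ⟨a⟩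
  classical
  have hstar' : ∀ s a, softBellman M Qstar s a = Qstar s a :=
    fun s a => congrFun (congrFun hstar s) a
  have hfix' : ∀ l s a, softBellmanPi M (πseq l) (Qseq l) s a = Qseq l s a :=
    fun l s a => congrFun (congrFun (hfix l) s) a
  have hboltz : ∀ l s a, softBellmanPi M (πseq (l+1)) (Qseq l) s a
      = softBellman M (Qseq l) s a :=
    fun l => boltzmann_value M (πseq (l+1)) (Qseq l) (himp l)
  -- each `Q^l` is below `Q*`
  have hQle : ∀ l s a, Qseq l s a ≤ Qstar s a := by
    intro l
    apply fixed_le_super M.γ M.γ_nonneg M.γ_lt_one (softBellmanPi M (πseq l))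
      (fun Q Q' h => softBellmanPi_mono M (πseq l) h)
      (fun Q c => softBellmanPi_shift M (πseq l) Q c)
      (Qseq l) Qstar (hfix' l)
    intro s a
    calc softBellmanPi M (πseq l) Qstar s a
        ≤ softBellman M Qstar s a := softBellmanPi_le_softBellman M (πseq l) Qstar s a
      _ = Qstar s a := hstar' s a
  -- policy improvement: `Q^l ≤ Q^{l+1}`
  have hmonoseq : ∀ l s a, Qseq l s a ≤ Qseq (l+1) s a := by
    intro l
    apply sub_le_fixed M.γ M.γ_nonneg M.γ_lt_one (softBellmanPi M (πseq (l+1)))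
      (fun Q Q' h => softBellmanPi_mono M (πseq (l+1)) h)
      (fun Q c => softBellmanPi_shift M (πseq (l+1)) Q c)
      (Qseq l) (Qseq (l+1)) ?_ (hfix' (l+1))
    intro s a
    calc Qseq l s a = softBellmanPi M (πseq l) (Qseq l) s a := (hfix' l s a).symm
      _ ≤ softBellman M (Qseq l) s a := softBellmanPi_le_softBellman M (πseq l) (Qseq l) s a
      _ = softBellmanPi M (πseq (l+1)) (Qseq l) s a := (hboltz l s a).symm
  -- the gap `d l = max (Q* - Q^l)` contracts
  set d : ℕ → ℝ := fun l => Finset.univ.sup' Finset.univ_nonempty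
    (fun p : S × A => Qstar p.1 p.2 - Qseq l p.1 p.2) with hd
  have hdle : ∀ l s a, Qstar s a - Qseq l s a ≤ d l := fun l s a =>
    Finset.le_sup' (f := fun p : S × A => Qstar p.1 p.2 - Qseq l p.1 p.2)
      (Finset.mem_univ (s, a))
  have hstep : ∀ l, d (l+1) ≤ M.γ * d l := by
    intro l
    apply Finset.sup'_le
    rintro ⟨s, a⟩ -
    simp only
    have h1 : softBellman M (Qseq l) s a ≤ Qseq (l+1) s a := by
      calc softBellman M (Qseq l) s a
          = softBellmanPi M (πseq (l+1)) (Qseq l) s a := (hboltz l s a).symm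
        _ ≤ softBellmanPi M (πseq (l+1)) (Qseq (l+1)) s a :=
            softBellmanPi_mono M _ (hmonoseq l) s a
        _ = Qseq (l+1) s a := hfix' (l+1) s a
    have h2 : Qstar s a ≤ softBellman M (Qseq l) s a + M.γ * d l := by
      calc Qstar s a = softBellman M Qstar s a := (hstar' s a).symm
        _ ≤ softBellman M (fun s a => Qseq l s a + d l) s a :=
            softBellman_mono M (fun s a => by have := hdle l s a; linarith) s a
        _ = softBellman M (Qseq l) s a + M.γ * d l := softBellman_shift M (Qseq l) (d l) s a
    linarith
  have hdpow : ∀ l, d l ≤ M.γ ^ l * d 0 := by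
    intro l
    induction l with
    | zero => simp
    | succ n ih =>
      calc d (n+1) ≤ M.γ * d n := hstep n
        _ ≤ M.γ * (M.γ ^ n * d 0) := mul_le_mul_of_nonneg_left ih M.γ_nonneg
        _ = M.γ ^ (n+1) * d 0 := by ring
  have hlow : ∀ l, Qstar s a - M.γ ^ l * d 0 ≤ Qseq l s a := by
    intro l
    have h1 := hdle l s a
    have h2 := hdpow l
    linarith
  have hup : ∀ l, Qseq l s a ≤ Qstar s a := fun l => hQle l s a
  have hγpow : Tendsto (fun l : ℕ => M.γ ^ l) atTop (𝓝 0) :=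
    tendsto_pow_atTop_nhds_zero_of_lt_one M.γ_nonneg M.γ_lt_one
  have hlowt : Tendsto (fun l : ℕ => Qstar s a - M.γ ^ l * d 0) atTop (𝓝 (Qstar s a)) := by
    have h0 : Tendsto (fun l : ℕ => M.γ ^ l * d 0) atTop (𝓝 0) := by
      simpa using hγpow.mul_const (d 0)
    simpa using tendsto_const_nhds.sub h0
  exact tendsto_of_tendsto_of_tendsto_of_le_of_le hlowt tendsto_const_nhds hlow hup
end

section
/- (One-step soft improvement inequality.) Let B be a nonempty finite set, let Q : B → ℝ, let π be any probability mass function on B, and let π' be the Boltzmann probability mass function π'(a) = exp Q(a) / Σ_{a' ∈ B} exp Q(a'). Then Σ_{a ∈ B} π(a) · (Q(a) − log π(a)) ≤ Σ_{a ∈ B} π'(a) · (Q(a) − log π'(a)), where terms with zero probability contribute 0. That is, replacing any policy by the Boltzmann policy with respect to Q does not decrease the expected Q-value plus entropy. -/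
/-- One-step soft improvement inequality: for any probability mass
function `π` on a nonempty finite set `B` and the Boltzmann pmf
`π' a = exp (Q a) / ∑ a', exp (Q a')`, replacing `π` by `π'` does not decrease the
expected `Q`-value plus entropy:
`∑ a, π a * (Q a − log (π a)) ≤ ∑ a, π' a * (Q a − log (π' a))`.
Terms with zero probability contribute `0` (the product vanishes). -/
theorem one_step_soft_improvement {B : Type*} [Fintype B] [Nonempty B]
    (Q : B → ℝ) (π : B → ℝ) (hπ0 : ∀ a, 0 ≤ π a) (hπ1 : ∑ a, π a = 1)
    (π' : B → ℝ) (hπ' : ∀ a, π' a = Real.exp (Q a) / ∑ a', Real.exp (Q a')) :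
    ∑ a, π a * (Q a - Real.log (π a)) ≤ ∑ a, π' a * (Q a - Real.log (π' a)) := by
  set Z : ℝ := ∑ a', Real.exp (Q a') with hZ
  have hZpos : 0 < Z := Finset.sum_pos (fun a _ => Real.exp_pos _) Finset.univ_nonempty
  -- RHS equals log Z
  have hRHS : ∑ a, π' a * (Q a - Real.log (π' a)) = Real.log Z := by
    have hsum' : ∑ a, π' a = 1 := by
      simp only [hπ']
      rw [← Finset.sum_div, ← hZ, div_self hZpos.ne']
    calc ∑ a, π' a * (Q a - Real.log (π' a))
        = ∑ a, π' a * Real.log Z := by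
          refine Finset.sum_congr rfl fun a _ => ?_
          rw [hπ', Real.log_div (Real.exp_ne_zero _) hZpos.ne', Real.log_exp]
          ring
      _ = (∑ a, π' a) * Real.log Z := by rw [Finset.sum_mul]
      _ = Real.log Z := by rw [hsum']; ring
  rw [hRHS]
  -- termwise bound: π a * (Q a - log (π a)) ≤ exp (Q a) / Z - π a + π a * log Z
  have key : ∀ a, π a * (Q a - Real.log (π a)) ≤
      Real.exp (Q a) / Z - π a + π a * Real.log Z := by
    intro a
    rcases eq_or_lt_of_le (hπ0 a) with h0 | hpos
    · rw [← h0]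
      simp
      positivity
    · have ht : 0 < Real.exp (Q a) / (π a * Z) := by positivity
      have hlog : Real.log (Real.exp (Q a) / (π a * Z)) ≤
          Real.exp (Q a) / (π a * Z) - 1 := Real.log_le_sub_one_of_pos ht
      have hle := mul_le_mul_of_nonneg_left hlog (hπ0 a)
      have hlogeq : Real.log (Real.exp (Q a) / (π a * Z)) =
          Q a - Real.log (π a) - Real.log Z := by
        rw [Real.log_div (Real.exp_ne_zero _) (by positivity),
          Real.log_mul hpos.ne' hZpos.ne', Real.log_exp]
        ring
      rw [hlogeq] at hle
      have hmul : π a * (Real.exp (Q a) / (π a * Z) - 1)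
          = Real.exp (Q a) / Z - π a := by
        field_simp
      rw [hmul] at hle
      nlinarith [hle]
  calc ∑ a, π a * (Q a - Real.log (π a))
      ≤ ∑ a, (Real.exp (Q a) / Z - π a + π a * Real.log Z) :=
        Finset.sum_le_sum fun a _ => key a
    _ = Real.log Z := by
        rw [Finset.sum_add_distrib, Finset.sum_sub_distrib, ← Finset.sum_div,
          ← hZ, div_self hZpos.ne', hπ1, ← Finset.sum_mul, hπ1]
        ring
end

section
/- (The Boltzmann policy of the optimal soft Q-function is optimal.) Let (S, A, 𝒜, p, r, γ) be a finite soft MDP and let Q* be the unique fixed point of the soft Bellman optimality operator T. Define the policy π* by π*(a|s) = exp Q*(s,a) / Σ_{a' ∈ 𝒜(s)} exp Q*(s,a') for a ∈ 𝒜(s) and π*(a|s) = 0 otherwise. Then Q* is the unique fixed point of the on-policy operator T^{π*}, i.e. Q^{π*} = Q*; in particular the soft value satisfies, for every state s, log (Σ_{a ∈ 𝒜(s)} exp Q*(s,a)) = Σ_{a ∈ 𝒜(s)} π*(a|s) · (Q*(s,a) − log π*(a|s)). -/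
/-- The Boltzmann policy of the optimal soft Q-function is optimal: if
`Q*` is the fixed point of `T` and `π*` is its Boltzmann policy over the allowed actions,
then `Q*` is the (unique) fixed point of `T^{π*}`, i.e. `Q^{π*} = Q*`; in particular, for
every state `s`,
`log (∑_{a ∈ 𝒜(s)} exp Q*(s,a)) = ∑_{a ∈ 𝒜(s)} π*(a|s) (Q*(s,a) − log π*(a|s))`. -/
theorem boltzmann_of_optimal_is_optimal {S A : Type} [Fintype S] [Fintype A] [DecidableEq A]
    (M : SoftMDP S A) (Qstar : S → A → ℝ)
    (hstar : softBellman M Qstar = Qstar)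
    (πstar : Policy M)
    (hπ : ∀ s a, πstar.pi s a =
      if a ∈ M.act s then
        Real.exp (Qstar s a) / ∑ a' ∈ M.act s, Real.exp (Qstar s a')
      else 0) :
    (softBellmanPi M πstar Qstar = Qstar) ∧
    (∀ Q : S → A → ℝ, softBellmanPi M πstar Q = Q → Q = Qstar) ∧
    (∀ s, Real.log (∑ a ∈ M.act s, Real.exp (Qstar s a)) =
      ∑ a ∈ M.act s, πstar.pi s a * (Qstar s a - Real.log (πstar.pi s a))) := by
 -- positivity of the partition function
  have hZpos : ∀ s, 0 < ∑ a ∈ M.act s, Real.exp (Qstar s a) := fun s =>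
    Finset.sum_pos (fun a _ => Real.exp_pos _) (M.act_nonempty s)
  have hval : ∀ s, Real.log (∑ a ∈ M.act s, Real.exp (Qstar s a)) =
      ∑ a ∈ M.act s, πstar.pi s a * (Qstar s a - Real.log (πstar.pi s a)) := by
    intro s
    have hπsum : ∑ a ∈ M.act s, πstar.pi s a = 1 := by
      rw [← πstar.pi_sum_one s]
      exact Finset.sum_subset (Finset.subset_univ _)
        (fun a _ ha => πstar.pi_support s a ha)
    calc Real.log (∑ a ∈ M.act s, Real.exp (Qstar s a))
        = ∑ a ∈ M.act s, πstar.pi s a * Real.log (∑ a' ∈ M.act s, Real.exp (Qstar s a')) := by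
          rw [← Finset.sum_mul, hπsum, one_mul]
      _ = ∑ a ∈ M.act s, πstar.pi s a * (Qstar s a - Real.log (πstar.pi s a)) := by
          refine Finset.sum_congr rfl fun a ha => ?_
          have hlog : Real.log (πstar.pi s a)
              = Qstar s a - Real.log (∑ a' ∈ M.act s, Real.exp (Qstar s a')) := by
            rw [hπ s a, if_pos ha, Real.log_div (Real.exp_ne_zero _) (ne_of_gt (hZpos s)),
              Real.log_exp]
          rw [hlog]; ring
  have hinner : ∀ (Q : S → A → ℝ) (s : S),
      ∑ a', πstar.pi s a' * (Q s a' - Real.log (πstar.pi s a')) =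
      ∑ a' ∈ M.act s, πstar.pi s a' * (Q s a' - Real.log (πstar.pi s a')) := by
    intro Q s
    exact (Finset.sum_subset (Finset.subset_univ _) (fun a _ ha => by
      rw [πstar.pi_support s a ha, zero_mul])).symm
  have hfix : softBellmanPi M πstar Qstar = Qstar := by
    funext s a
    rw [← congrFun (congrFun hstar s) a]
    simp only [softBellmanPi, softBellman]
    congr 2
    refine Finset.sum_congr rfl fun s' _ => ?_
    rw [hinner Qstar s', ← hval s']
  refine ⟨hfix, ?_, hval⟩
  intro Q hQ
  rcases isEmpty_or_nonempty S with h | h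
  · funext s; exact isEmptyElim s
  · have hA : Nonempty A := ⟨(M.act_nonempty (Classical.arbitrary S)).choose⟩
    set C := Finset.sup' Finset.univ Finset.univ_nonempty
        (fun p : S × A => |Q p.1 p.2 - Qstar p.1 p.2|) with hCdef
    have hC : ∀ s a, |Q s a - Qstar s a| ≤ C := fun s a =>
      Finset.le_sup' (fun p : S × A => |Q p.1 p.2 - Qstar p.1 p.2|) (Finset.mem_univ (s, a))
    have hbound : ∀ s a, |Q s a - Qstar s a| ≤ M.γ * C := by
      intro s a
      have h1 : Q s a - Qstar s a = M.γ * ∑ s', M.p s a s' *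
          ∑ a', πstar.pi s' a' * (Q s' a' - Qstar s' a') := by
        conv_lhs => rw [← congrFun (congrFun hQ s) a, ← congrFun (congrFun hfix s) a]
        simp only [softBellmanPi]
        rw [add_sub_add_left_eq_sub, ← mul_sub, ← Finset.sum_sub_distrib]
        congr 1
        refine Finset.sum_congr rfl fun s' _ => ?_
        rw [← mul_sub, ← Finset.sum_sub_distrib]
        congr 1
        refine Finset.sum_congr rfl fun a' _ => ?_
        ring
      rw [h1, abs_mul, abs_of_nonneg M.γ_nonneg]
      refine mul_le_mul_of_nonneg_left ?_ M.γ_nonneg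
      calc |∑ s', M.p s a s' * ∑ a', πstar.pi s' a' * (Q s' a' - Qstar s' a')|
          ≤ ∑ s', |M.p s a s' * ∑ a', πstar.pi s' a' * (Q s' a' - Qstar s' a')| :=
            Finset.abs_sum_le_sum_abs _ _
        _ ≤ ∑ s', M.p s a s' * C := by
            refine Finset.sum_le_sum fun s' _ => ?_
            rw [abs_mul, abs_of_nonneg (M.p_nonneg s a s')]
            refine mul_le_mul_of_nonneg_left ?_ (M.p_nonneg s a s')
            calc |∑ a', πstar.pi s' a' * (Q s' a' - Qstar s' a')|
                ≤ ∑ a', |πstar.pi s' a' * (Q s' a' - Qstar s' a')| :=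
                  Finset.abs_sum_le_sum_abs _ _
              _ ≤ ∑ a', πstar.pi s' a' * C := by
                  refine Finset.sum_le_sum fun a' _ => ?_
                  rw [abs_mul, abs_of_nonneg (πstar.pi_nonneg s' a')]
                  exact mul_le_mul_of_nonneg_left (hC s' a') (πstar.pi_nonneg s' a')
              _ = C := by rw [← Finset.sum_mul, πstar.pi_sum_one, one_mul]
        _ = C := by rw [← Finset.sum_mul, M.p_sum_one, one_mul]
    have hCle : C ≤ M.γ * C := Finset.sup'_le _ _ fun p _ => hbound p.1 p.2
    have hCnn : 0 ≤ C := le_trans (abs_nonneg _)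
      (hC (Classical.arbitrary S) (Classical.arbitrary A))
    have hC0 : C ≤ 0 := by nlinarith [M.γ_lt_one]
    funext s a
    have h2 : |Q s a - Qstar s a| ≤ 0 := le_trans (hC s a) hC0
    have h3 : |Q s a - Qstar s a| = 0 := le_antisymm h2 (abs_nonneg _)
    rw [abs_eq_zero] at h3
    linarith
end
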